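/- arXiv:0810.1460 — 3 statements merged into one kernel-verified Lean document; each statement's English description precedes it below -/
import Mathlib

section
/- Let {T, N, B₁, B₂} be a timelike Frenet frame with curvatures κ₁, κ₂, κ₃ on an open interval I, let U ∈ ℝ⁴ be a fixed vector, and let a₁ = −⟨T,U⟩, a₂ = ⟨N,U⟩, a₃ = ⟨B₁,U⟩, a₄ = ⟨B₂,U⟩. If a₄ is constant on I, then a₃ = 0 on I, a₂ = (κ₃/κ₂)·a₄ on I, and a₂ = −a₁′/κ₁ on I. -/
/-- The Lorentzian (Minkowski) bilinear form on `ℝ⁴`: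
`⟨u,v⟩ = -u₁v₁ + u₂v₂ + u₃v₃ + u₄v₄`. -/
noncomputable def minkProd (u v : Fin 4 → ℝ) : ℝ :=
  -(u 0 * v 0) + u 1 * v 1 + u 2 * v 2 + u 3 * v 3


lemma minkProd_hasDerivAt {X : ℝ → Fin 4 → ℝ} {D : Fin 4 → ℝ} (U : Fin 4 → ℝ) {s : ℝ}
    (hX : HasDerivAt X D s) :
    HasDerivAt (fun t => minkProd (X t) U) (minkProd D U) s := by
  have h : ∀ i, HasDerivAt (fun t => X t i) (D i) s := fun i => (hasDerivAt_pi.mp hX) i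
  unfold minkProd
  exact (((((h 0).mul_const (U 0)).neg).add ((h 1).mul_const (U 1))).add
    ((h 2).mul_const (U 2))).add ((h 3).mul_const (U 3))

theorem stmt_7
    (Ivl : Set ℝ) (hIopen : IsOpen Ivl) (hIconn : IsConnected Ivl)
    (T N B1 B2 : ℝ → Fin 4 → ℝ) (κ1 κ2 κ3 : ℝ → ℝ)
    (hTsm : ContDiffOn ℝ (⊤ : ℕ∞) T Ivl) (hNsm : ContDiffOn ℝ (⊤ : ℕ∞) N Ivl)
    (hB1sm : ContDiffOn ℝ (⊤ : ℕ∞) B1 Ivl) (hB2sm : ContDiffOn ℝ (⊤ : ℕ∞) B2 Ivl)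
    (hκ1sm : ContDiffOn ℝ (⊤ : ℕ∞) κ1 Ivl) (hκ2sm : ContDiffOn ℝ (⊤ : ℕ∞) κ2 Ivl)
    (hκ3sm : ContDiffOn ℝ (⊤ : ℕ∞) κ3 Ivl)
    (hκ1ne : ∀ s ∈ Ivl, κ1 s ≠ 0) (hκ2ne : ∀ s ∈ Ivl, κ2 s ≠ 0)
    (hκ3ne : ∀ s ∈ Ivl, κ3 s ≠ 0)
    (hTT : ∀ s ∈ Ivl, minkProd (T s) (T s) = -1)
    (hNN : ∀ s ∈ Ivl, minkProd (N s) (N s) = 1)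
    (hB1B1 : ∀ s ∈ Ivl, minkProd (B1 s) (B1 s) = 1)
    (hB2B2 : ∀ s ∈ Ivl, minkProd (B2 s) (B2 s) = 1)
    (hTN : ∀ s ∈ Ivl, minkProd (T s) (N s) = 0)
    (hTB1 : ∀ s ∈ Ivl, minkProd (T s) (B1 s) = 0)
    (hTB2 : ∀ s ∈ Ivl, minkProd (T s) (B2 s) = 0)
    (hNB1 : ∀ s ∈ Ivl, minkProd (N s) (B1 s) = 0)
    (hNB2 : ∀ s ∈ Ivl, minkProd (N s) (B2 s) = 0)
    (hB1B2 : ∀ s ∈ Ivl, minkProd (B1 s) (B2 s) = 0)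
    (hT' : ∀ s ∈ Ivl, HasDerivAt T (κ1 s • N s) s)
    (hN' : ∀ s ∈ Ivl, HasDerivAt N (κ1 s • T s + κ2 s • B1 s) s)
    (hB1' : ∀ s ∈ Ivl, HasDerivAt B1 ((-(κ2 s)) • N s + κ3 s • B2 s) s)
    (hB2' : ∀ s ∈ Ivl, HasDerivAt B2 ((-(κ3 s)) • B1 s) s)
    (U : Fin 4 → ℝ)
    (h : ∃ c : ℝ, ∀ s ∈ Ivl, minkProd (B2 s) U = c) :
    ∀ s ∈ Ivl,
      minkProd (B1 s) U = 0 ∧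
      minkProd (N s) U = (κ3 s / κ2 s) * minkProd (B2 s) U ∧
      minkProd (N s) U = -(deriv (fun t => -minkProd (T t) U) s) / κ1 s := by
  obtain ⟨c, hc⟩ := h
  have ha3 : ∀ s ∈ Ivl, minkProd (B1 s) U = 0 := by
    intro s hs
    have hd1 := minkProd_hasDerivAt U (hB2' s hs)
    have hd0 : HasDerivAt (fun t => minkProd (B2 t) U) 0 s := by
      have heq : (fun t => minkProd (B2 t) U) =ᶠ[nhds s] fun _ => c :=
        Filter.eventuallyEq_of_mem (hIopen.mem_nhds hs) (fun t ht => hc t ht)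
      exact (hasDerivAt_const s c).congr_of_eventuallyEq heq
    have huniq := hd1.unique hd0
    have hsm : minkProd ((-(κ3 s)) • B1 s) U = -(κ3 s) * minkProd (B1 s) U := by
      simp [minkProd, Pi.smul_apply, smul_eq_mul]; ring
    rw [hsm] at huniq
    rcases mul_eq_zero.mp huniq with h1 | h1
    · exact absurd (neg_eq_zero.mp h1) (hκ3ne s hs)
    · exact h1
  intro s hs
  have hd1 := minkProd_hasDerivAt U (hB1' s hs)
  have hd0 : HasDerivAt (fun t => minkProd (B1 t) U) 0 s := by
    have heq : (fun t => minkProd (B1 t) U) =ᶠ[nhds s] fun _ => 0 :=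
      Filter.eventuallyEq_of_mem (hIopen.mem_nhds hs) (fun t ht => ha3 t ht)
    exact (hasDerivAt_const s (0:ℝ)).congr_of_eventuallyEq heq
  have huniq := hd1.unique hd0
  have hsm : minkProd ((-(κ2 s)) • N s + κ3 s • B2 s) U
      = -(κ2 s) * minkProd (N s) U + κ3 s * minkProd (B2 s) U := by
    simp [minkProd, Pi.smul_apply, Pi.add_apply, smul_eq_mul]; ring
  rw [hsm] at huniq
  have ha2 : minkProd (N s) U = (κ3 s / κ2 s) * minkProd (B2 s) U := by
    rw [div_mul_eq_mul_div, eq_div_iff (hκ2ne s hs)]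
    linarith [huniq]
  refine ⟨ha3 s hs, ha2, ?_⟩
  have hdT := minkProd_hasDerivAt U (hT' s hs)
  have hdTneg : HasDerivAt (fun t => -minkProd (T t) U) (-(minkProd (κ1 s • N s) U)) s := hdT.neg
  rw [hdTneg.deriv]
  have hsm2 : minkProd (κ1 s • N s) U = κ1 s * minkProd (N s) U := by
    simp [minkProd, Pi.smul_apply, smul_eq_mul]; ring
  rw [hsm2, neg_neg]
  rw [mul_div_cancel_left₀ _ (hκ1ne s hs)]
end

section
/- Let {T, N, B₁, B₂} be a timelike Frenet frame with curvatures κ₁, κ₂, κ₃ on an open interval I containing 0. Then the frame is a B₂-slant helix if and only if there exist real numbers C and D such that κ₃(s)/κ₂(s) = C·sinh(∫₀ˢ κ₁(t) dt) + D·cosh(∫₀ˢ κ₁(t) dt) for all s ∈ I. -/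
set_option maxHeartbeats 1000000


lemma minkProd_smul_left (x : ℝ) (v U : Fin 4 → ℝ) :
    minkProd (x • v) U = x * minkProd v U := by
  simp [minkProd]; ring

lemma minkProd_add_left (v w U : Fin 4 → ℝ) :
    minkProd (v + w) U = minkProd v U + minkProd w U := by
  simp [minkProd]; ring

lemma minkProd_zero_right (v : Fin 4 → ℝ) : minkProd v 0 = 0 := by
  simp [minkProd]

lemma hasDerivAt_mink {F : ℝ → Fin 4 → ℝ} {v U : Fin 4 → ℝ} {s : ℝ}
    (h : HasDerivAt F v s) :
    HasDerivAt (fun s => minkProd (F s) U) (minkProd v U) s := by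
  have h' := hasDerivAt_pi.mp h
  exact ((((h' 0).mul_const (U 0)).neg.add ((h' 1).mul_const (U 1))).add
      ((h' 2).mul_const (U 2))).add ((h' 3).mul_const (U 3))

lemma const_of_deriv_zero {E : Type*} [NormedAddCommGroup E] [NormedSpace ℝ E]
    {s : Set ℝ} (hs : IsOpen s) (hc : IsPreconnected s) {F : ℝ → E}
    (hF : ∀ x ∈ s, HasDerivAt F 0 x) {x y : ℝ} (hx : x ∈ s) (hy : y ∈ s) :
    F x = F y := by
  have hconv : Convex ℝ s := hc.convex
  refine hconv.is_const_of_fderivWithin_eq_zero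
    (fun z hz => ((hF z hz).differentiableAt).differentiableWithinAt) ?_ hx hy
  intro z hz
  rw [fderivWithin_of_isOpen hs hz, (hF z hz).hasFDerivAt.fderiv]
  ext w
  simp

lemma finsucc0 : (Fin.succ 0 : Fin 4) = 1 := rfl
lemma finsucc1 : (Fin.succ 1 : Fin 4) = 2 := rfl
lemma finsucc2 : (Fin.succ 2 : Fin 4) = 3 := rfl

lemma mink_nondeg (t n b1 b2 U : Fin 4 → ℝ)
    (htt : minkProd t t = -1) (hnn : minkProd n n = 1)
    (hb1b1 : minkProd b1 b1 = 1) (hb2b2 : minkProd b2 b2 = 1)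
    (htn : minkProd t n = 0) (htb1 : minkProd t b1 = 0) (htb2 : minkProd t b2 = 0)
    (hnb1 : minkProd n b1 = 0) (hnb2 : minkProd n b2 = 0) (hb1b2 : minkProd b1 b2 = 0)
    (h1 : minkProd t U = 0) (h2 : minkProd n U = 0)
    (h3 : minkProd b1 U = 0) (h4 : minkProd b2 U = 0) : U = 0 := by
  classical
  simp only [minkProd] at htt hnn hb1b1 hb2b2 htn htb1 htb2 hnb1 hnb2 hb1b2 h1 h2 h3 h4
  set M : Matrix (Fin 4) (Fin 4) ℝ := Matrix.of ![t, n, b1, b2] with hM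
  set J : Matrix (Fin 4) (Fin 4) ℝ :=
    Matrix.of ![![-1,0,0,0],![0,1,0,0],![0,0,1,0],![0,0,0,1]] with hJ
  have hMJM : M * J * M.transpose = J := by
    ext i j
    fin_cases i <;> fin_cases j <;>
      simp [M, J, Matrix.mul_apply, Fin.sum_univ_four, Matrix.transpose_apply,
        Matrix.vecHead, Matrix.vecTail, Function.comp, finsucc0, finsucc1, finsucc2] <;>
      linarith [htt, hnn, hb1b1, hb2b2, htn, htb1, htb2, hnb1, hnb2, hb1b2]
  have hJJ : J * J = 1 := by
    ext i j
    fin_cases i <;> fin_cases j <;>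
      simp [J, Matrix.mul_apply, Fin.sum_univ_four, Matrix.one_apply,
        Matrix.vecHead, Matrix.vecTail, Function.comp, finsucc0, finsucc1, finsucc2]
  set K : Matrix (Fin 4) (Fin 4) ℝ := M * J with hK
  have hright : K * (M.transpose * J) = 1 := by
    calc K * (M.transpose * J) = M * J * M.transpose * J := by
          rw [hK]; noncomm_ring
      _ = J * J := by rw [hMJM]
      _ = 1 := hJJ
  have hleft : (M.transpose * J) * K = 1 := mul_eq_one_comm.mp hright
  have hKU : K.mulVec U = 0 := by
    ext i
    fin_cases i <;>
      simp [K, M, J, Matrix.mulVec, Matrix.mul_apply, dotProduct,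
        Matrix.vecHead, Matrix.vecTail, Function.comp, finsucc0, finsucc1, finsucc2,
        Fin.sum_univ_four] <;>
      linarith [h1, h2, h3, h4]
  have h5 : (M.transpose * J).mulVec (K.mulVec U) = U := by
    rw [Matrix.mulVec_mulVec, hleft, Matrix.one_mulVec]
  rw [hKU, Matrix.mulVec_zero] at h5
  exact h5.symm

theorem stmt_14
    (Ivl : Set ℝ) (hIopen : IsOpen Ivl) (hIconn : IsConnected Ivl)
    (hI0 : (0 : ℝ) ∈ Ivl)
    (T N B1 B2 : ℝ → Fin 4 → ℝ) (κ1 κ2 κ3 : ℝ → ℝ)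
    (hTsm : ContDiffOn ℝ (⊤ : ℕ∞) T Ivl) (hNsm : ContDiffOn ℝ (⊤ : ℕ∞) N Ivl)
    (hB1sm : ContDiffOn ℝ (⊤ : ℕ∞) B1 Ivl) (hB2sm : ContDiffOn ℝ (⊤ : ℕ∞) B2 Ivl)
    (hκ1sm : ContDiffOn ℝ (⊤ : ℕ∞) κ1 Ivl) (hκ2sm : ContDiffOn ℝ (⊤ : ℕ∞) κ2 Ivl)
    (hκ3sm : ContDiffOn ℝ (⊤ : ℕ∞) κ3 Ivl)
    (hκ1ne : ∀ s ∈ Ivl, κ1 s ≠ 0) (hκ2ne : ∀ s ∈ Ivl, κ2 s ≠ 0)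
    (hκ3ne : ∀ s ∈ Ivl, κ3 s ≠ 0)
    (hTT : ∀ s ∈ Ivl, minkProd (T s) (T s) = -1)
    (hNN : ∀ s ∈ Ivl, minkProd (N s) (N s) = 1)
    (hB1B1 : ∀ s ∈ Ivl, minkProd (B1 s) (B1 s) = 1)
    (hB2B2 : ∀ s ∈ Ivl, minkProd (B2 s) (B2 s) = 1)
    (hTN : ∀ s ∈ Ivl, minkProd (T s) (N s) = 0)
    (hTB1 : ∀ s ∈ Ivl, minkProd (T s) (B1 s) = 0)
    (hTB2 : ∀ s ∈ Ivl, minkProd (T s) (B2 s) = 0)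
    (hNB1 : ∀ s ∈ Ivl, minkProd (N s) (B1 s) = 0)
    (hNB2 : ∀ s ∈ Ivl, minkProd (N s) (B2 s) = 0)
    (hB1B2 : ∀ s ∈ Ivl, minkProd (B1 s) (B2 s) = 0)
    (hT' : ∀ s ∈ Ivl, HasDerivAt T (κ1 s • N s) s)
    (hN' : ∀ s ∈ Ivl, HasDerivAt N (κ1 s • T s + κ2 s • B1 s) s)
    (hB1' : ∀ s ∈ Ivl, HasDerivAt B1 ((-(κ2 s)) • N s + κ3 s • B2 s) s)
    (hB2' : ∀ s ∈ Ivl, HasDerivAt B2 ((-(κ3 s)) • B1 s) s)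
    :
    (∃ U : Fin 4 → ℝ, U ≠ 0 ∧ ∃ c : ℝ, ∀ s ∈ Ivl, minkProd (B2 s) U = c) ↔
      (∃ C D : ℝ, ∀ s ∈ Ivl,
        κ3 s / κ2 s = C * Real.sinh (∫ t in (0:ℝ)..s, κ1 t)
          + D * Real.cosh (∫ t in (0:ℝ)..s, κ1 t)) := by
  have hIpre : IsPreconnected Ivl := hIconn.isPreconnected
  have hord : Set.OrdConnected Ivl := hIpre.convex.ordConnected
  have hκ1cont : ContinuousOn κ1 Ivl := hκ1sm.continuousOn
  set θ : ℝ → ℝ := fun s => ∫ t in (0:ℝ)..s, κ1 t with hθdef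
  have hθ' : ∀ s ∈ Ivl, HasDerivAt θ (κ1 s) s := by
    intro s hs
    exact intervalIntegral.integral_hasDerivAt_right
      ((hκ1cont.mono (hord.uIcc_subset hI0 hs)).intervalIntegrable)
      (hκ1cont.stronglyMeasurableAtFilter hIopen s hs)
      (hκ1cont.continuousAt (hIopen.mem_nhds hs))
  have hθ0 : θ 0 = 0 := intervalIntegral.integral_same
  constructor
  · rintro ⟨U, hU0, c, hUc⟩
    set a : ℝ → ℝ := fun s => minkProd (T s) U with hadef
    set b : ℝ → ℝ := fun s => minkProd (N s) U with hbdef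
    set d : ℝ → ℝ := fun s => minkProd (B1 s) U with hddef
    set e : ℝ → ℝ := fun s => minkProd (B2 s) U with hedef
    have hda : ∀ s ∈ Ivl, HasDerivAt a (κ1 s * b s) s := by
      intro s hs
      have h := hasDerivAt_mink (U := U) (hT' s hs)
      rwa [minkProd_smul_left] at h
    have hdb : ∀ s ∈ Ivl, HasDerivAt b (κ1 s * a s + κ2 s * d s) s := by
      intro s hs
      have h := hasDerivAt_mink (U := U) (hN' s hs)
      rwa [minkProd_add_left, minkProd_smul_left, minkProd_smul_left] at h
    have hdd : ∀ s ∈ Ivl, HasDerivAt d (-(κ2 s) * b s + κ3 s * e s) s := by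
      intro s hs
      have h := hasDerivAt_mink (U := U) (hB1' s hs)
      rwa [minkProd_add_left, minkProd_smul_left, minkProd_smul_left] at h
    have hde : ∀ s ∈ Ivl, HasDerivAt e (-(κ3 s) * d s) s := by
      intro s hs
      have h := hasDerivAt_mink (U := U) (hB2' s hs)
      rwa [minkProd_smul_left] at h
    have hde0 : ∀ s ∈ Ivl, HasDerivAt e 0 s := by
      intro s hs
      have hev : e =ᶠ[nhds s] (fun _ => c) :=
        Filter.eventuallyEq_of_mem (hIopen.mem_nhds hs) (fun x hx => hUc x hx)
      exact (hasDerivAt_const s c).congr_of_eventuallyEq hev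
    have hd0 : ∀ s ∈ Ivl, d s = 0 := by
      intro s hs
      have h := (hde s hs).unique (hde0 s hs)
      rcases mul_eq_zero.mp h with h' | h'
      · exact absurd (neg_eq_zero.mp h') (hκ3ne s hs)
      · exact h'
    have hd0' : ∀ s ∈ Ivl, HasDerivAt d 0 s := by
      intro s hs
      have hev : d =ᶠ[nhds s] (fun _ => (0:ℝ)) :=
        Filter.eventuallyEq_of_mem (hIopen.mem_nhds hs) (fun x hx => hd0 x hx)
      exact (hasDerivAt_const s (0:ℝ)).congr_of_eventuallyEq hev
    have hkb : ∀ s ∈ Ivl, κ2 s * b s = κ3 s * c := by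
      intro s hs
      have h := (hdd s hs).unique (hd0' s hs)
      have he : e s = c := hUc s hs
      rw [he] at h
      linarith
    have hdb' : ∀ s ∈ Ivl, HasDerivAt b (κ1 s * a s) s := by
      intro s hs
      have h := hdb s hs
      rwa [hd0 s hs, mul_zero, add_zero] at h
    by_cases hc : c = 0
    · exfalso
      have hb0 : ∀ s ∈ Ivl, b s = 0 := by
        intro s hs
        have h := hkb s hs
        rw [hc, mul_zero] at h
        rcases mul_eq_zero.mp h with h' | h'
        · exact absurd h' (hκ2ne s hs)
        · exact h'
      have ha0 : ∀ s ∈ Ivl, a s = 0 := by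
        intro s hs
        have hev : b =ᶠ[nhds s] (fun _ => (0:ℝ)) :=
          Filter.eventuallyEq_of_mem (hIopen.mem_nhds hs) (fun x hx => hb0 x hx)
        have h := (hdb' s hs).unique ((hasDerivAt_const s (0:ℝ)).congr_of_eventuallyEq hev)
        rcases mul_eq_zero.mp h with h' | h'
        · exact absurd h' (hκ1ne s hs)
        · exact h'
      have he0 : e 0 = 0 := by
        show minkProd (B2 0) U = 0
        rw [hUc 0 hI0, hc]
      exact hU0 (mink_nondeg (T 0) (N 0) (B1 0) (B2 0) U
        (hTT 0 hI0) (hNN 0 hI0) (hB1B1 0 hI0) (hB2B2 0 hI0)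
        (hTN 0 hI0) (hTB1 0 hI0) (hTB2 0 hI0) (hNB1 0 hI0) (hNB2 0 hI0) (hB1B2 0 hI0)
        (ha0 0 hI0) (hb0 0 hI0) (hd0 0 hI0) he0)
    · refine ⟨a 0 / c, b 0 / c, ?_⟩
      intro s hs
      have hf : ∀ u ∈ Ivl, HasDerivAt
          (fun u => a u * Real.cosh (θ u) - b u * Real.sinh (θ u)) 0 u := by
        intro u hu
        have h1 := (hda u hu).mul ((hθ' u hu).cosh)
        have h2 := (hdb' u hu).mul ((hθ' u hu).sinh)
        have h := h1.sub h2
        refine h.congr_deriv ?_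
        ring
      have hg : ∀ u ∈ Ivl, HasDerivAt
          (fun u => b u * Real.cosh (θ u) - a u * Real.sinh (θ u)) 0 u := by
        intro u hu
        have h1 := (hdb' u hu).mul ((hθ' u hu).cosh)
        have h2 := (hda u hu).mul ((hθ' u hu).sinh)
        have h := h1.sub h2
        refine h.congr_deriv ?_
        ring
      have hfval : a s * Real.cosh (θ s) - b s * Real.sinh (θ s) = a 0 := by
        have := const_of_deriv_zero hIopen hIpre hf hs hI0
        simpa [hθ0] using this
      have hgval : b s * Real.cosh (θ s) - a s * Real.sinh (θ s) = b 0 := by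
        have := const_of_deriv_zero hIopen hIpre hg hs hI0
        simpa [hθ0] using this
      have hcs : Real.cosh (θ s) ^ 2 - Real.sinh (θ s) ^ 2 = 1 :=
        Real.cosh_sq_sub_sinh_sq (θ s)
      have hbs : b s = a 0 * Real.sinh (θ s) + b 0 * Real.cosh (θ s) := by
        linear_combination Real.sinh (θ s) * hfval + Real.cosh (θ s) * hgval
          - b s * hcs
      have hdiv : κ3 s / κ2 s = b s / c := by
        rw [div_eq_div_iff (hκ2ne s hs) hc]
        linarith [hkb s hs]
      show κ3 s / κ2 s = a 0 / c * Real.sinh (θ s) + b 0 / c * Real.cosh (θ s)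
      rw [hdiv, hbs]
      ring
  · rintro ⟨C, D, hCD⟩
    set α : ℝ → ℝ := fun s => -(C * Real.cosh (θ s) + D * Real.sinh (θ s)) with hα
    set β : ℝ → ℝ := fun s => C * Real.sinh (θ s) + D * Real.cosh (θ s) with hβ
    set V : ℝ → Fin 4 → ℝ := fun s => α s • T s + β s • N s + B2 s with hV
    have hone : ∀ s ∈ Ivl, minkProd (B2 s) (V s) = 1 := by
      intro s hs
      have e1 := hTB2 s hs
      have e2 := hNB2 s hs
      have e3 := hB2B2 s hs
      simp only [minkProd, hV, Pi.add_apply, Pi.smul_apply, smul_eq_mul] at e1 e2 e3 ⊢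
      linear_combination α s * e1 + β s * e2 + e3
    have hV' : ∀ s ∈ Ivl, HasDerivAt V 0 s := by
      intro s hs
      have hκ3 : κ3 s = β s * κ2 s := by
        have h := hCD s hs
        rw [div_eq_iff (hκ2ne s hs)] at h
        exact h
      have hαd : HasDerivAt α (-(κ1 s) * β s) s := by
        have h := (((hθ' s hs).cosh.const_mul C).add ((hθ' s hs).sinh.const_mul D)).neg
        refine h.congr_deriv ?_
        simp only [hβ]
        ring
      have hβd : HasDerivAt β (-(κ1 s) * α s) s := by
        have h := ((hθ' s hs).sinh.const_mul C).add ((hθ' s hs).cosh.const_mul D)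
        refine h.congr_deriv ?_
        simp only [hα]
        ring
      have h := ((hαd.smul (hT' s hs)).add (hβd.smul (hN' s hs))).add (hB2' s hs)
      refine h.congr_deriv ?_
      symm
      funext i
      simp only [Pi.add_apply, Pi.smul_apply, Pi.zero_apply, smul_eq_mul]
      linear_combination (B1 s i) * hκ3
    have hVc : ∀ s ∈ Ivl, V s = V 0 := fun s hs =>
      const_of_deriv_zero hIopen hIpre hV' hs hI0
    refine ⟨V 0, ?_, 1, ?_⟩
    · intro h0
      have h1 := hone 0 hI0
      rw [show V 0 = 0 from h0] at h1
      rw [minkProd_zero_right] at h1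
      exact one_ne_zero h1.symm
    · intro s hs
      rw [← hVc s hs]
      exact hone s hs
end

section
/- Let {T, N, B₁, B₂} be a timelike Frenet frame with curvatures κ₁, κ₂, κ₃ on an open interval I, and define f : I → ℝ by f(s) = (1/κ₁(s))·(κ₃/κ₂)′(s). Then the frame is a B₂-slant helix if and only if f′(s) = κ₁(s)·κ₃(s)/κ₂(s) for all s ∈ I. -/
lemma mink_smul_left (r : ℝ) (u v : Fin 4 → ℝ) :
    minkProd (r • u) v = r * minkProd u v := by
  simp [minkProd]; ring

lemma mink_add_left (u w v : Fin 4 → ℝ) :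
    minkProd (u + w) v = minkProd u v + minkProd w v := by
  simp [minkProd]; ring

lemma hasDerivAt_mink_const {X : ℝ → Fin 4 → ℝ} {X' : Fin 4 → ℝ} (U : Fin 4 → ℝ) {s : ℝ}
    (hX : HasDerivAt X X' s) :
    HasDerivAt (fun t => minkProd (X t) U) (minkProd X' U) s := by
  have h := hasDerivAt_pi.mp hX
  have h2 : HasDerivAt (fun t => -(X t 0 * U 0) + X t 1 * U 1 + X t 2 * U 2 + X t 3 * U 3)
      (-(X' 0 * U 0) + X' 1 * U 1 + X' 2 * U 2 + X' 3 * U 3) s :=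
    ((((h 0).mul_const (U 0)).neg.add ((h 1).mul_const (U 1))).add
      ((h 2).mul_const (U 2))).add ((h 3).mul_const (U 3))
  simpa [minkProd] using h2

lemma deriv_eq_on_open {h k : ℝ → ℝ} {D E : ℝ} {s : Set ℝ} {x : ℝ} (hs : IsOpen s)
    (hx : x ∈ s) (heq : ∀ y ∈ s, h y = k y)
    (hh : HasDerivAt h D x) (hk : HasDerivAt k E x) : D = E := by
  have he : h =ᶠ[nhds x] k := Filter.eventuallyEq_of_mem (hs.mem_nhds hx) heq
  exact hh.unique (hk.congr_of_eventuallyEq he)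

lemma frame_nondeg (t n b1 b2 U : Fin 4 → ℝ)
    (hTT : minkProd t t = -1) (hNN : minkProd n n = 1) (h11 : minkProd b1 b1 = 1)
    (h22 : minkProd b2 b2 = 1) (hTN : minkProd t n = 0) (hT1 : minkProd t b1 = 0)
    (hT2 : minkProd t b2 = 0) (hN1 : minkProd n b1 = 0) (hN2 : minkProd n b2 = 0)
    (h12 : minkProd b1 b2 = 0)
    (hUt : minkProd t U = 0) (hUn : minkProd n U = 0) (hU1 : minkProd b1 U = 0)
    (hU2 : minkProd b2 U = 0) : U = 0 := by
  simp only [minkProd] at *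
  have hDD : (Matrix.diagonal ![(-1:ℝ),1,1,1]) * (Matrix.diagonal ![(-1:ℝ),1,1,1]) = 1 := by
    rw [Matrix.diagonal_mul_diagonal]
    ext i j
    fin_cases i <;> fin_cases j <;> simp [Matrix.diagonal_apply]
  have hMDM : (Matrix.of ![t, n, b1, b2]) * (Matrix.diagonal ![(-1:ℝ),1,1,1]) *
      (Matrix.of ![t, n, b1, b2]).transpose = Matrix.diagonal ![(-1:ℝ),1,1,1] := by
    ext i j
    rw [Matrix.mul_apply]
    simp only [Matrix.mul_apply, Matrix.transpose_apply, Matrix.diagonal_apply,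
      Fin.sum_univ_four, Matrix.of_apply]
    fin_cases i <;> fin_cases j <;> simp <;> linarith
  have hdet : (Matrix.of ![t, n, b1, b2]).det * (Matrix.of ![t, n, b1, b2]).det = 1 := by
    have h1 := congrArg Matrix.det hMDM
    rw [Matrix.det_mul, Matrix.det_mul, Matrix.det_transpose] at h1
    have h2 : (Matrix.diagonal ![(-1:ℝ),1,1,1]).det = -1 := by
      rw [Matrix.det_diagonal]
      simp [Fin.prod_univ_four]
    rw [h2] at h1
    generalize (Matrix.of ![t, n, b1, b2]).det = x at h1 ⊢
    linear_combination -h1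
  have hunit : IsUnit (Matrix.of ![t, n, b1, b2]).det := by
    refine isUnit_iff_ne_zero.mpr fun h0 => ?_
    rw [h0] at hdet; norm_num at hdet
  have hMw : (Matrix.of ![t, n, b1, b2]).mulVec
      ((Matrix.diagonal ![(-1:ℝ),1,1,1]).mulVec U) = 0 := by
    ext i
    simp only [Matrix.mulVec, dotProduct, Fin.sum_univ_four, Matrix.of_apply,
      Matrix.diagonal_apply]
    fin_cases i <;> simp <;> linarith
  have hw : (Matrix.diagonal ![(-1:ℝ),1,1,1]).mulVec U = 0 := by
    have h1 : ((Matrix.of ![t, n, b1, b2])⁻¹ * (Matrix.of ![t, n, b1, b2])).mulVec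
        ((Matrix.diagonal ![(-1:ℝ),1,1,1]).mulVec U) = 0 := by
      rw [← Matrix.mulVec_mulVec, hMw, Matrix.mulVec_zero]
    rwa [Matrix.nonsing_inv_mul _ hunit, Matrix.one_mulVec] at h1
  have hU : U = (Matrix.diagonal ![(-1:ℝ),1,1,1]).mulVec
      ((Matrix.diagonal ![(-1:ℝ),1,1,1]).mulVec U) := by
    rw [Matrix.mulVec_mulVec, hDD, Matrix.one_mulVec]
  rw [hU, hw, Matrix.mulVec_zero]
theorem stmt_16
    (Ivl : Set ℝ) (hIopen : IsOpen Ivl) (hIconn : IsConnected Ivl)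
    (T N B1 B2 : ℝ → Fin 4 → ℝ) (κ1 κ2 κ3 : ℝ → ℝ)
    (hTsm : ContDiffOn ℝ (⊤ : ℕ∞) T Ivl) (hNsm : ContDiffOn ℝ (⊤ : ℕ∞) N Ivl)
    (hB1sm : ContDiffOn ℝ (⊤ : ℕ∞) B1 Ivl) (hB2sm : ContDiffOn ℝ (⊤ : ℕ∞) B2 Ivl)
    (hκ1sm : ContDiffOn ℝ (⊤ : ℕ∞) κ1 Ivl) (hκ2sm : ContDiffOn ℝ (⊤ : ℕ∞) κ2 Ivl)
    (hκ3sm : ContDiffOn ℝ (⊤ : ℕ∞) κ3 Ivl)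
    (hκ1ne : ∀ s ∈ Ivl, κ1 s ≠ 0) (hκ2ne : ∀ s ∈ Ivl, κ2 s ≠ 0)
    (hκ3ne : ∀ s ∈ Ivl, κ3 s ≠ 0)
    (hTT : ∀ s ∈ Ivl, minkProd (T s) (T s) = -1)
    (hNN : ∀ s ∈ Ivl, minkProd (N s) (N s) = 1)
    (hB1B1 : ∀ s ∈ Ivl, minkProd (B1 s) (B1 s) = 1)
    (hB2B2 : ∀ s ∈ Ivl, minkProd (B2 s) (B2 s) = 1)
    (hTN : ∀ s ∈ Ivl, minkProd (T s) (N s) = 0)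
    (hTB1 : ∀ s ∈ Ivl, minkProd (T s) (B1 s) = 0)
    (hTB2 : ∀ s ∈ Ivl, minkProd (T s) (B2 s) = 0)
    (hNB1 : ∀ s ∈ Ivl, minkProd (N s) (B1 s) = 0)
    (hNB2 : ∀ s ∈ Ivl, minkProd (N s) (B2 s) = 0)
    (hB1B2 : ∀ s ∈ Ivl, minkProd (B1 s) (B2 s) = 0)
    (hT' : ∀ s ∈ Ivl, HasDerivAt T (κ1 s • N s) s)
    (hN' : ∀ s ∈ Ivl, HasDerivAt N (κ1 s • T s + κ2 s • B1 s) s)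
    (hB1' : ∀ s ∈ Ivl, HasDerivAt B1 ((-(κ2 s)) • N s + κ3 s • B2 s) s)
    (hB2' : ∀ s ∈ Ivl, HasDerivAt B2 ((-(κ3 s)) • B1 s) s)
    (f : ℝ → ℝ)
    (hf : ∀ s, f s = (1 / κ1 s) * deriv (fun t => κ3 t / κ2 t) s) :
    (∃ U : Fin 4 → ℝ, U ≠ 0 ∧ ∃ c : ℝ, ∀ s ∈ Ivl, minkProd (B2 s) U = c) ↔
      (∀ s ∈ Ivl, deriv f s = κ1 s * κ3 s / κ2 s) := by
  have hconv : Convex ℝ Ivl :=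
    (isPreconnected_iff_ordConnected.mp hIconn.isPreconnected).convex
  have hκ1d : ∀ s ∈ Ivl, DifferentiableAt ℝ κ1 s := fun s hs =>
    (hκ1sm.contDiffAt (hIopen.mem_nhds hs)).differentiableAt (by simp)
  have hκ2d : ∀ s ∈ Ivl, DifferentiableAt ℝ κ2 s := fun s hs =>
    (hκ2sm.contDiffAt (hIopen.mem_nhds hs)).differentiableAt (by simp)
  have hκ3d : ∀ s ∈ Ivl, DifferentiableAt ℝ κ3 s := fun s hs =>
    (hκ3sm.contDiffAt (hIopen.mem_nhds hs)).differentiableAt (by simp)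
  have hgd : ∀ s ∈ Ivl, DifferentiableAt ℝ (fun t => κ3 t / κ2 t) s := fun s hs =>
    (hκ3d s hs).div (hκ2d s hs) (hκ2ne s hs)
  have hgsm : ContDiffOn ℝ (⊤ : ℕ∞) (fun t => κ3 t / κ2 t) Ivl := hκ3sm.div hκ2sm hκ2ne
  have hfsm : ContDiffOn ℝ (⊤ : ℕ∞) f Ivl := by
    have h1 : ContDiffOn ℝ (⊤ : ℕ∞) (deriv (fun t => κ3 t / κ2 t)) Ivl :=
      hgsm.deriv_of_isOpen hIopen (by simp)
    have h2 : ContDiffOn ℝ (⊤ : ℕ∞) (fun s => (1 / κ1 s) * deriv (fun t => κ3 t / κ2 t) s) Ivl :=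
      (contDiffOn_const.div hκ1sm hκ1ne).mul h1
    exact h2.congr fun s _ => hf s
  have hfd : ∀ s ∈ Ivl, DifferentiableAt ℝ f s := fun s hs =>
    (hfsm.contDiffAt (hIopen.mem_nhds hs)).differentiableAt (by simp)
  constructor
  · rintro ⟨U, hU0, c, hc⟩
    have hdz : ∀ s ∈ Ivl, minkProd (B1 s) U = 0 := by
      intro s hs
      have hD : HasDerivAt (fun t => minkProd (B2 t) U) (minkProd ((-(κ3 s)) • B1 s) U) s :=
        hasDerivAt_mink_const U (hB2' s hs)
      have h0 : minkProd ((-(κ3 s)) • B1 s) U = 0 :=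
        deriv_eq_on_open hIopen hs hc hD (hasDerivAt_const s c)
      rw [mink_smul_left] at h0
      rcases mul_eq_zero.mp h0 with h | h
      · exact absurd (neg_eq_zero.mp h) (hκ3ne s hs)
      · exact h
    have hbz : ∀ s ∈ Ivl, κ2 s * minkProd (N s) U = κ3 s * c := by
      intro s hs
      have hD : HasDerivAt (fun t => minkProd (B1 t) U)
          (minkProd ((-(κ2 s)) • N s + κ3 s • B2 s) U) s :=
        hasDerivAt_mink_const U (hB1' s hs)
      have h0 : minkProd ((-(κ2 s)) • N s + κ3 s • B2 s) U = 0 :=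
        deriv_eq_on_open hIopen hs hdz hD (hasDerivAt_const s (0:ℝ))
      rw [mink_add_left, mink_smul_left, mink_smul_left, hc s hs] at h0
      linarith
    have haz : ∀ s ∈ Ivl, κ1 s * minkProd (T s) U = c * deriv (fun t => κ3 t / κ2 t) s := by
      intro s hs
      have hD : HasDerivAt (fun t => minkProd (N t) U)
          (minkProd (κ1 s • T s + κ2 s • B1 s) U) s :=
        hasDerivAt_mink_const U (hN' s hs)
      have hK : HasDerivAt (fun t => c * (κ3 t / κ2 t))
          (c * deriv (fun t => κ3 t / κ2 t) s) s :=
        (hgd s hs).hasDerivAt.const_mul c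
      have heq : ∀ y ∈ Ivl, minkProd (N y) U = c * (κ3 y / κ2 y) := by
        intro y hy
        have h := hbz y hy
        have hy2 := hκ2ne y hy
        field_simp
        linarith
      have h0 := deriv_eq_on_open hIopen hs heq hD hK
      rw [mink_add_left, mink_smul_left, mink_smul_left, hdz s hs] at h0
      linarith
    have hac : ∀ s ∈ Ivl, minkProd (T s) U = c * f s := by
      intro s hs
      have h := haz s hs
      have h1 := hκ1ne s hs
      rw [hf s]
      field_simp
      linarith
    have hkey : ∀ s ∈ Ivl, c * deriv f s = c * (κ1 s * κ3 s / κ2 s) := by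
      intro s hs
      have hD : HasDerivAt (fun t => minkProd (T t) U) (minkProd (κ1 s • N s) U) s :=
        hasDerivAt_mink_const U (hT' s hs)
      have hF : HasDerivAt (fun t => c * f t) (c * deriv f s) s :=
        (hfd s hs).hasDerivAt.const_mul c
      have h0 := deriv_eq_on_open hIopen hs hac hD hF
      rw [mink_smul_left] at h0
      have hb := hbz s hs
      have h2 := hκ2ne s hs
      field_simp
      linear_combination κ1 s * hb - κ2 s * h0
    by_cases hcz : c = 0
    · exfalso
      obtain ⟨s₀, hs₀⟩ := hIconn.nonempty
      apply hU0
      refine frame_nondeg (T s₀) (N s₀) (B1 s₀) (B2 s₀) U (hTT s₀ hs₀) (hNN s₀ hs₀)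
        (hB1B1 s₀ hs₀) (hB2B2 s₀ hs₀) (hTN s₀ hs₀) (hTB1 s₀ hs₀) (hTB2 s₀ hs₀)
        (hNB1 s₀ hs₀) (hNB2 s₀ hs₀) (hB1B2 s₀ hs₀) ?_ ?_ (hdz s₀ hs₀) ?_
      · rw [hac s₀ hs₀, hcz, zero_mul]
      · have h := hbz s₀ hs₀
        rw [hcz, mul_zero] at h
        rcases mul_eq_zero.mp h with h' | h'
        · exact absurd h' (hκ2ne s₀ hs₀)
        · exact h'
      · rw [hc s₀ hs₀, hcz]
    · intro s hs
      exact mul_left_cancel₀ hcz (hkey s hs)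
  · intro hder
    obtain ⟨s₀, hs₀⟩ := hIconn.nonempty
    have hg' : ∀ s ∈ Ivl, deriv (fun t => κ3 t / κ2 t) s = κ1 s * f s := by
      intro s hs
      have h := hf s
      have h1 := hκ1ne s hs
      rw [h]
      field_simp
    set X : ℝ → Fin 4 → ℝ := fun t => (-(f t)) • T t + ((κ3 t / κ2 t) • N t + B2 t) with hX
    have hXd : ∀ s ∈ Ivl, HasDerivAt X 0 s := by
      intro s hs
      have hfder : HasDerivAt f (κ1 s * (κ3 s / κ2 s)) s := by
        have h := (hfd s hs).hasDerivAt
        rwa [hder s hs, show κ1 s * κ3 s / κ2 s = κ1 s * (κ3 s / κ2 s) by ring] at h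
      have hnf : HasDerivAt (fun t => -(f t)) (-(κ1 s * (κ3 s / κ2 s))) s := hfder.neg
      have hgder : HasDerivAt (fun t => κ3 t / κ2 t) (κ1 s * f s) s := by
        have h := (hgd s hs).hasDerivAt
        rwa [hg' s hs] at h
      have h1 : HasDerivAt (fun t => (-(f t)) • T t)
          ((-(f s)) • (κ1 s • N s) + (-(κ1 s * (κ3 s / κ2 s))) • T s) s :=
        hnf.smul (hT' s hs)
      have h2 : HasDerivAt (fun t => (κ3 t / κ2 t) • N t)
          ((κ3 s / κ2 s) • (κ1 s • T s + κ2 s • B1 s) + (κ1 s * f s) • N s) s :=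
        hgder.smul (hN' s hs)
      have h4 := h1.add (h2.add (hB2' s hs))
      refine h4.congr_deriv ?_
      have h2ne := hκ2ne s hs
      funext i
      simp only [Pi.add_apply, Pi.smul_apply, smul_eq_mul, Pi.zero_apply]
      field_simp
      ring
    have hXconst : ∀ s ∈ Ivl, X s = X s₀ := by
      intro s hs
      refine hconv.is_const_of_fderivWithin_eq_zero
        (fun y hy => ((hXd y hy).differentiableAt).differentiableWithinAt) ?_ hs hs₀
      intro y hy
      have hF : HasFDerivAt X (0 : ℝ →L[ℝ] (Fin 4 → ℝ)) y := by
        have h := (hXd y hy).hasFDerivAt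
        refine h.congr_fderiv ?_
        ext v
        simp
      exact hF.hasFDerivWithinAt.fderivWithin (hIopen.uniqueDiffWithinAt hy)
    have hval : ∀ s ∈ Ivl, minkProd (B2 s) (X s) = 1 := by
      intro s hs
      have h2 := hB2B2 s hs
      have ht2 := hTB2 s hs
      have hn2 := hNB2 s hs
      simp only [minkProd] at h2 ht2 hn2 ⊢
      simp only [hX, Pi.add_apply, Pi.smul_apply, smul_eq_mul]
      linear_combination (-(f s)) * ht2 + (κ3 s / κ2 s) * hn2 + h2
    refine ⟨X s₀, ?_, 1, fun s hs => ?_⟩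
    · intro h0
      have h := hval s₀ hs₀
      rw [h0] at h
      simp [minkProd] at h
    · rw [← hXconst s hs]
      exact hval s hs
end
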